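/- arXiv:1306.5338 — 6 statements merged into one kernel-verified Lean document; each statement's English description precedes it below -/
import Mathlib

section
/- Let X₀ be a real symmetric n×n matrix whose largest eigenvalue λ₁ is positive and simple, with unit eigenvector w₁. Then as t → (1/λ₁)⁻, the normalized matrix X(t)/‖X(t)‖_F converges to the rank-one matrix w₁ w₁ᵀ, where X(t) = X₀(I − tX₀)⁻¹ and ‖·‖_F is the Frobenius norm. -/
/-!
Put `P = w₁ w₁ᵀ` and `R = X₀ - λ₁ P`. Since `X₀` is symmetric, `P R = R P = 0`, so
`I - t X₀ = (I - t R)(I - t λ₁ P)` and, for `t ≠ 1/λ₁`,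
`X₀ (I - t X₀)⁻¹ = (1/λ₁ - t)⁻¹ P + R (I - t R)⁻¹`.
Simplicity of `λ₁` means that `λ₁` is not an eigenvalue of `R`, so the second term has a
finite limit as `t → 1/λ₁`, while the coefficient `(1/λ₁ - t)⁻¹` tends to `+∞` from the left.
After normalization only `P / ‖P‖_F = P` survives.
-/

open Matrix Filter Topology

attribute [local instance] Matrix.frobeniusNormedAddCommGroup Matrix.frobeniusNormedSpace

theorem tendsto_inv_sub_nhdsLT (a : ℝ) : Tendsto (fun t => (a - t)⁻¹) (𝓝[<] a) atTop := by
  refine tendsto_inv_nhdsGT_zero.comp (tendsto_nhdsWithin_iff.2 ⟨?_, ?_⟩)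
  · exact ((continuous_const.sub continuous_id).tendsto' a 0 (sub_self a)).mono_left
      nhdsWithin_le_nhds
  · filter_upwards [self_mem_nhdsWithin] with t ht
    exact Set.mem_Ioi.2 (sub_pos.2 ht)

section Normalization

variable {E : Type*} [NormedAddCommGroup E] [NormedSpace ℝ E]

theorem inv_norm_smul_smul_of_pos {c : ℝ} (hc : 0 < c) (u : E) :
    ‖c • u‖⁻¹ • (c • u) = ‖u‖⁻¹ • u := by
  rw [norm_smul, Real.norm_of_nonneg hc.le, smul_smul, mul_inv, mul_right_comm,
    inv_mul_cancel₀ hc.ne', one_mul]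

theorem tendsto_inv_norm_smul_smul_add {α : Type*} {l : Filter α} {c : α → ℝ} {B : α → E}
    {v b : E} (hv : v ≠ 0) (hc : Tendsto c l atTop) (hB : Tendsto B l (𝓝 b)) :
    Tendsto (fun x => ‖c x • v + B x‖⁻¹ • (c x • v + B x)) l (𝓝 (‖v‖⁻¹ • v)) := by
  have hu : Tendsto (fun x => v + (c x)⁻¹ • B x) l (𝓝 v) := by
    simpa using tendsto_const_nhds.add (hc.inv_tendsto_atTop.smul hB)
  have hnormalize : ContinuousAt (fun u : E => ‖u‖⁻¹ • u) v :=
    (continuous_norm.continuousAt.inv₀ (norm_ne_zero_iff.2 hv)).smul continuousAt_id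
  refine (hnormalize.tendsto.comp hu).congr' ?_
  filter_upwards [hc.eventually_gt_atTop 0] with x hx
  rw [Function.comp_apply, ← inv_norm_smul_smul_of_pos hx, smul_add, smul_inv_smul₀ hx.ne']

end Normalization

namespace Matrix

variable {m K : Type*} [Fintype m]

theorem frobenius_norm_vecMulVec {n α : Type*} [Fintype n] [NormedDivisionRing α] (u : m → α)
    (v : n → α) : ‖vecMulVec u v‖ = ‖WithLp.toLp 2 u‖ * ‖WithLp.toLp 2 v‖ := by
  simp only [frobenius_norm_def, PiLp.norm_eq_of_L2, vecMulVec_apply, norm_mul, Real.rpow_two,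
    mul_pow, ← Finset.mul_sum, ← Finset.sum_mul, Real.sqrt_eq_rpow]
  rw [Real.mul_rpow (by positivity) (by positivity)]

section RankOne

variable [CommRing K] {w : m → K}

theorem isIdempotentElem_vecMulVec_self (hw : w ⬝ᵥ w = 1) : IsIdempotentElem (vecMulVec w w) := by
  rw [IsIdempotentElem, vecMulVec_mul_vecMulVec, hw, one_smul]

theorem vecMulVec_self_mulVec_smul (hw : w ⬝ᵥ w = 1) (c : K) :
    vecMulVec w w *ᵥ (c • w) = c • w := by
  rw [vecMulVec_mulVec, dotProduct_smul, hw, smul_eq_mul, mul_one, op_smul_eq_smul]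

theorem mul_vecMulVec_of_mulVec_eq {X : Matrix m m K} {μ : K} (h : X *ᵥ w = μ • w) (v : m → K) :
    X * vecMulVec w v = μ • vecMulVec w v := by
  rw [mul_vecMulVec, h, smul_vecMulVec]

theorem vecMulVec_mul_of_mulVec_eq {X : Matrix m m K} (hX : Xᵀ = X) {μ : K}
    (h : X *ᵥ w = μ • w) (v : m → K) : vecMulVec v w * X = μ • vecMulVec v w := by
  rw [vecMulVec_mul, ← mulVec_transpose, hX, h, vecMulVec_smul]

end RankOne

variable [DecidableEq m]

section Field

variable [Field K] {P R : Matrix m m K}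

theorem inv_one_sub_smul_of_isIdempotentElem (hP : IsIdempotentElem P) {s : K} (hs : s ≠ 1) :
    (1 - s • P)⁻¹ = 1 + (s / (1 - s)) • P := by
  refine inv_eq_right_inv ?_
  simp only [sub_mul, mul_add, one_mul, mul_one, smul_mul_smul_comm, hP.eq]
  match_scalars
  · rfl
  · field_simp [sub_ne_zero.2 hs.symm]
    ring

theorem smul_add_mul_inv_one_sub_smul (hP : IsIdempotentElem P) (hPR : P * R = 0)
    (hRP : R * P = 0) {μ t : K} (hμ : μ ≠ 0) (ht : t ≠ μ⁻¹) (hR : IsUnit (1 - t • R).det) :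
    (μ • P + R) * (1 - t • (μ • P + R))⁻¹ = (μ⁻¹ - t)⁻¹ • P + R * (1 - t • R)⁻¹ := by
  have hμt : μ * t ≠ 1 := fun h => ht (eq_inv_of_mul_eq_one_right h)
  have hfactor : 1 - t • (μ • P + R) = (1 - t • R) * (1 - (μ * t) • P) := by
    simp only [sub_mul, mul_sub, one_mul, mul_one, mul_smul_comm, smul_mul_assoc, hRP, smul_zero]
    module
  have hPQ : P * (1 - t • R)⁻¹ = P := by
    have h : P * (1 - t • R) = P := by
      rw [mul_sub, mul_smul_comm, hPR, smul_zero, sub_zero, mul_one]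
    conv_lhs => rw [← h, Matrix.mul_assoc, mul_nonsing_inv _ hR, mul_one]
  have hscalar : μ + μ * t / (1 - μ * t) * μ = (μ⁻¹ - t)⁻¹ := by
    field_simp [sub_ne_zero.2 hμt.symm]
    ring
  have hX : (μ • P + R) * (1 + (μ * t / (1 - μ * t)) • P) = (μ⁻¹ - t)⁻¹ • P + R := by
    simp only [mul_add, add_mul, mul_one, mul_smul_comm, smul_mul_assoc, hP.eq, hRP]
    rw [← hscalar]
    module
  rw [hfactor, mul_inv_rev, inv_one_sub_smul_of_isIdempotentElem hP hμt, ← Matrix.mul_assoc, hX,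
    add_mul, smul_mul_assoc, hPQ]

theorem isUnit_det_one_sub_inv_smul (hPR : P * R = 0) {μ : K} (hμ : μ ≠ 0)
    (heig : ∀ v, (μ • P + R) *ᵥ v = μ • v → P *ᵥ v = v) : IsUnit (1 - μ⁻¹ • R).det := by
  rw [isUnit_iff_ne_zero, Ne, ← exists_mulVec_eq_zero_iff]
  rintro ⟨v, hv, hv₀⟩
  have hRv : R *ᵥ v = μ • v := by
    rw [sub_mulVec, one_mulVec, smul_mulVec, sub_eq_zero] at hv₀
    conv_rhs => rw [hv₀, smul_inv_smul₀ hμ]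
  have hPv : P *ᵥ v = 0 := by
    have h : μ • P *ᵥ v = 0 := by rw [← mulVec_smul, ← hRv, mulVec_mulVec, hPR, zero_mulVec]
    exact (smul_eq_zero.1 h).resolve_left hμ
  refine hv ?_
  rw [← heig v (by rw [add_mulVec, smul_mulVec, hPv, smul_zero, zero_add, hRv]), hPv]

end Field

section NormedField

variable [NormedField K] (R : Matrix m m K) {t₀ : K}

theorem continuousAt_mul_inv_one_sub_smul (h : IsUnit (1 - t₀ • R).det) :
    ContinuousAt (fun t : K => R * (1 - t • R)⁻¹) t₀ := by
  refine continuousAt_const.mul ((continuousAt_matrix_inv _ ?_).comp (by fun_prop))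
  rw [Ring.inverse_eq_inv']
  exact continuousAt_inv₀ h.ne_zero

theorem eventually_isUnit_det_one_sub_smul (h : IsUnit (1 - t₀ • R).det) :
    ∀ᶠ t in 𝓝 t₀, IsUnit (1 - t • R).det := by
  simp_rw [isUnit_iff_ne_zero]
  exact (by fun_prop : Continuous fun t : K => (1 - t • R).det).continuousAt.eventually_ne
    h.ne_zero

end NormedField

end Matrix

theorem normalized_solution_tendsto_rank_one_general {n : ℕ} (X₀ : Matrix (Fin n) (Fin n) ℝ)
    (hsym : X₀ᵀ = X₀) (lam1 : ℝ) (hpos : 0 < lam1) (w1 : Fin n → ℝ)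
    (heig : X₀.mulVec w1 = lam1 • w1)
    (hunit : ∑ i, w1 i ^ 2 = 1)
    (hsimple : ∀ v : Fin n → ℝ, v ≠ 0 → X₀.mulVec v = lam1 • v → ∃ c : ℝ, v = c • w1) :
    Tendsto
      (fun t : ℝ => ‖X₀ * ((1 : Matrix (Fin n) (Fin n) ℝ) - t • X₀)⁻¹‖⁻¹ •
        (X₀ * (1 - t • X₀)⁻¹))
      (nhdsWithin (1 / lam1) (Set.Iio (1 / lam1)))
      (nhds (Matrix.of fun i j => w1 i * w1 j)) := by
  have hw : w1 ⬝ᵥ w1 = 1 := by simpa [dotProduct, sq] using hunit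
  set P := vecMulVec w1 w1
  set R := X₀ - lam1 • P
  have hP : IsIdempotentElem P := isIdempotentElem_vecMulVec_self hw
  have hX : X₀ = lam1 • P + R := (add_sub_cancel _ _).symm
  have hPR : P * R = 0 := by
    rw [mul_sub, vecMulVec_mul_of_mulVec_eq hsym heig, mul_smul_comm, hP.eq, sub_self]
  have hRP : R * P = 0 := by
    rw [sub_mul, mul_vecMulVec_of_mulVec_eq heig, smul_mul_assoc, hP.eq, sub_self]
  have hR : IsUnit (1 - lam1⁻¹ • R).det := by
    refine isUnit_det_one_sub_inv_smul hPR hpos.ne' fun v hv => ?_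
    rcases eq_or_ne v 0 with rfl | hv₀
    · exact mulVec_zero P
    · obtain ⟨c, rfl⟩ := hsimple v hv₀ (hX ▸ hv)
      exact vecMulVec_self_mulVec_smul hw c
  have hPnorm : ‖P‖ = 1 := by
    rw [frobenius_norm_vecMulVec, EuclideanSpace.norm_eq]
    simp [hunit]
  have hlim := tendsto_inv_norm_smul_smul_add (v := P) (norm_pos_iff.1 (hPnorm ▸ one_pos))
    (tendsto_inv_sub_nhdsLT lam1⁻¹)
    ((continuousAt_mul_inv_one_sub_smul R hR).tendsto.mono_left nhdsWithin_le_nhds)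
  rw [hPnorm, inv_one, one_smul] at hlim
  rw [one_div]
  refine hlim.congr' ?_
  filter_upwards [self_mem_nhdsWithin,
    nhdsWithin_le_nhds (eventually_isUnit_det_one_sub_smul R hR)] with t ht htR
  rw [hX, smul_add_mul_inv_one_sub_smul hP hPR hRP hpos.ne' ht.ne htR]

/-- For symmetric `X₀` with simple, strictly largest eigenvalue `λ₁ > 0` and unit
eigenvector `w₁`, the normalized solution `X(t)/‖X(t)‖_F` converges to `w₁ w₁ᵀ`
as `t → (1/λ₁)⁻`, where `X(t) = X₀ (I - t X₀)⁻¹`. -/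
theorem normalized_solution_tendsto_rank_one {n : ℕ} (X₀ : Matrix (Fin n) (Fin n) ℝ)
    (hsym : X₀ᵀ = X₀) (lam1 : ℝ) (hpos : 0 < lam1) (w1 : Fin n → ℝ)
    (heig : X₀.mulVec w1 = lam1 • w1)
    (hunit : ∑ i, w1 i ^ 2 = 1)
    (hsimple : ∀ v : Fin n → ℝ, v ≠ 0 → X₀.mulVec v = lam1 • v → ∃ c : ℝ, v = c • w1)
    (hmax : ∀ μ : ℝ, μ ≠ lam1 → (∃ v, v ≠ 0 ∧ X₀.mulVec v = μ • v) → μ < lam1) :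
    Tendsto
      (fun t : ℝ => ‖X₀ * ((1 : Matrix (Fin n) (Fin n) ℝ) - t • X₀)⁻¹‖⁻¹ •
        (X₀ * (1 - t • X₀)⁻¹))
      (nhdsWithin (1 / lam1) (Set.Iio (1 / lam1)))
      (nhds (Matrix.of fun i j => w1 i * w1 j)) :=
  normalized_solution_tendsto_rank_one_general X₀ hsym lam1 hpos w1 heig hunit hsimple
end

section
/- A complete signed graph on n ≥ 3 vertices is structurally balanced (every triangle has positive sign product) if and only if the vertex set can be partitioned into two (possibly empty) sets such that every edge within a set is positive and every edge between the two sets is negative. -/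
/-!
Fix a vertex `z` and give every vertex `i ≠ z` the sign `σ z i` (and `z` itself the sign `+1`).
Balance of the triangle `z i j` says exactly that `σ i j` is the product of the signs of `i`
and `j`, so the positive-sign vertices and the negative-sign vertices are the two factions.
Conversely, if `σ i j = s i * s j` with `s = ±1`, every triangle has sign
`(s i * s j * s k) ^ 2 = 1`.
-/

namespace SignedGraph

variable {V : Type*} (σ : V → V → ℤ)

def IsBalanced : Prop :=
  ∀ i j k, i ≠ j → j ≠ k → i ≠ k → σ i j * σ j k * σ i k = 1

def IsFactionSplit (S : Set V) : Prop :=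
  ∀ i j, i ≠ j → (((i ∈ S ↔ j ∈ S) → σ i j = 1) ∧ (¬(i ∈ S ↔ j ∈ S) → σ i j = -1))

open Classical in
noncomputable def factionSign (S : Set V) (i : V) : ℤ := if i ∈ S then 1 else -1

variable {σ}

theorem factionSign_setOf_eq_one {s : V → ℤ} (hs : ∀ i, s i = 1 ∨ s i = -1) :
    factionSign {i | s i = 1} = s := by
  funext i
  rcases hs i with h | h <;> simp [factionSign, h]

theorem factionSign_mul_self (S : Set V) (i : V) : factionSign S i * factionSign S i = 1 := by
  unfold factionSign; split_ifs <;> norm_num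

theorem isFactionSplit_iff_eq_factionSign_mul (S : Set V) :
    IsFactionSplit σ S ↔ ∀ i j, i ≠ j → σ i j = factionSign S i * factionSign S j := by
  refine forall₂_congr fun i j => imp_congr_right fun _ => ?_
  by_cases hi : i ∈ S <;> by_cases hj : j ∈ S <;> simp [factionSign, hi, hj]

theorem isBalanced_of_eq_mul {s : V → ℤ} (hs : ∀ i, s i * s i = 1)
    (h : ∀ i j, i ≠ j → σ i j = s i * s j) : IsBalanced σ := by
  intro i j k hij hjk hik
  rw [h i j hij, h j k hjk, h i k hik]
  linear_combination (s j * s j * s k * s k) * hs i + (s k * s k) * hs j + hs k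

theorem IsBalanced.exists_eq_mul (hsym : ∀ i j, σ i j = σ j i)
    (hval : ∀ i j, i ≠ j → σ i j = 1 ∨ σ i j = -1) (hbal : IsBalanced σ) :
    ∃ s : V → ℤ, (∀ i, s i = 1 ∨ s i = -1) ∧ ∀ i j, i ≠ j → σ i j = s i * s j := by
  rcases isEmpty_or_nonempty V with _ | ⟨⟨z⟩⟩
  · exact ⟨1, fun i => isEmptyElim i, fun i => isEmptyElim i⟩
  classical
  have hsq : ∀ i, z ≠ i → σ z i * σ z i = 1 := fun i hzi => by
    rcases hval z i hzi with h | h <;> rw [h] <;> norm_num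
  refine ⟨fun i => if i = z then 1 else σ z i, fun i => ?_, fun i j hij => ?_⟩
  · dsimp only
    split_ifs with hi
    · exact Or.inl rfl
    · exact hval z i (Ne.symm hi)
  by_cases hi : i = z
  · subst hi; simp [Ne.symm hij]
  by_cases hj : j = z
  · subst hj; simp [hi, hsym i j]
  simp only [hi, hj, if_false]
  have hzi : z ≠ i := Ne.symm hi
  have hzj : z ≠ j := Ne.symm hj
  -- `σ i j = σ i j * (σ z i)² * (σ z j)² = (σ z i * σ i j * σ z j) * σ z i * σ z j`
  linear_combination (-σ i j) * hsq i hzi - σ i j * σ z i * σ z i * hsq j hzj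
    + σ z i * σ z j * hbal z i j hzi hij hzj

theorem isBalanced_iff_exists_isFactionSplit (hsym : ∀ i j, σ i j = σ j i)
    (hval : ∀ i j, i ≠ j → σ i j = 1 ∨ σ i j = -1) :
    IsBalanced σ ↔ ∃ S, IsFactionSplit σ S := by
  simp only [isFactionSplit_iff_eq_factionSign_mul]
  constructor
  · intro hbal
    obtain ⟨s, hs, hσ⟩ := hbal.exists_eq_mul hsym hval
    exact ⟨{i | s i = 1}, by rwa [factionSign_setOf_eq_one hs]⟩
  · rintro ⟨S, hS⟩
    exact isBalanced_of_eq_mul (factionSign_mul_self S) hS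

end SignedGraph

theorem structural_balance_iff_two_factions_general {n : ℕ}
    (σ : Fin n → Fin n → ℤ)
    (hsym : ∀ i j, σ i j = σ j i)
    (hval : ∀ i j, i ≠ j → σ i j = 1 ∨ σ i j = -1) :
    (∀ i j k : Fin n, i ≠ j → j ≠ k → i ≠ k → σ i j * σ j k * σ i k = 1) ↔
    ∃ S : Set (Fin n), ∀ i j : Fin n, i ≠ j →
      (((i ∈ S ↔ j ∈ S) → σ i j = 1) ∧ (¬(i ∈ S ↔ j ∈ S) → σ i j = -1)) :=
  SignedGraph.isBalanced_iff_exists_isFactionSplit hsym hval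

/-- Cartwright–Harary structure theorem: a complete signed graph on `n ≥ 3` vertices is
structurally balanced iff the vertex set can be partitioned into two (possibly empty)
sets with positive edges within each set and negative edges between the sets. -/
theorem structural_balance_iff_two_factions {n : ℕ} (hn : 3 ≤ n)
    (σ : Fin n → Fin n → ℤ)
    (hsym : ∀ i j, σ i j = σ j i)
    (hval : ∀ i j, i ≠ j → σ i j = 1 ∨ σ i j = -1) :
    (∀ i j k : Fin n, i ≠ j → j ≠ k → i ≠ k → σ i j * σ j k * σ i k = 1) ↔
    ∃ S : Set (Fin n), ∀ i j : Fin n, i ≠ j →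
      (((i ∈ S ↔ j ∈ S) → σ i j = 1) ∧ (¬(i ∈ S ↔ j ∈ S) → σ i j = -1)) :=
  structural_balance_iff_two_factions_general σ hsym hval
end

section
/- Let X₀ be a real symmetric n×n matrix, v* ∈ ℝⁿ a vector with v*₁ ≠ 0, and λ* ∈ ℝ. Then there exists a symmetric matrix ΔX₀, supported on the first row and column (ΔX₀_{ij} = 0 whenever i ≠ 1 and j ≠ 1), such that (X₀ + ΔX₀) v* = λ* v*. -/
open Matrix

/-! The perturbation is taken of the form `a eₖᵀ + eₖ aᵀ`, which is symmetric and supported on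
row and column `k`, and maps `v` to `v k • a + (a ⬝ᵥ v) • eₖ`. Matching this with the
residual `r = λ v - X₀ v` forces `a = (r - c • eₖ) / v k`, and then `a ⬝ᵥ v = c` is the linear equation
`r ⬝ᵥ v / v k - c = c`, solvable because `2 ≠ 0`. -/

section RowColumnPerturbation

variable {ι : Type*} [Fintype ι] [DecidableEq ι]

lemma vecMulVec_add_vecMulVec_single_mulVec {R : Type*} [CommSemiring R] (k : ι) (a v : ι → R) :
    (vecMulVec a (Pi.single k 1) + vecMulVec (Pi.single k 1) a) *ᵥ v =
      v k • a + (a ⬝ᵥ v) • Pi.single k 1 := by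
  simp only [add_mulVec, vecMulVec_mulVec, single_dotProduct, one_mul, op_smul_eq_smul]

variable {K : Type*} [Field K]

lemma exists_smul_add_dotProduct_smul_single_eq (h2 : (2 : K) ≠ 0) {k : ι} {v : ι → K}
    (hv : v k ≠ 0) (r : ι → K) :
    ∃ a : ι → K, v k • a + (a ⬝ᵥ v) • Pi.single k 1 = r := by
  obtain ⟨c, hc⟩ : ∃ c, 2 * v k * c = r ⬝ᵥ v := ⟨_, mul_div_cancel₀ _ (mul_ne_zero h2 hv)⟩
  refine ⟨(v k)⁻¹ • (r - c • Pi.single k 1), ?_⟩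
  have hdot : ((v k)⁻¹ • (r - c • Pi.single k 1)) ⬝ᵥ v = c := by
    rw [smul_dotProduct, sub_dotProduct, smul_dotProduct, single_dotProduct, smul_eq_mul,
      smul_eq_mul, one_mul, inv_mul_eq_iff_eq_mul₀ hv]
    linear_combination -hc
  rw [hdot, smul_smul, mul_inv_cancel₀ hv, one_smul, sub_add_cancel]

lemma exists_symm_rowColumn_mulVec_eq (h2 : (2 : K) ≠ 0) {k : ι} {v : ι → K}
    (hv : v k ≠ 0) (r : ι → K) :
    ∃ ΔX : Matrix ι ι K, ΔXᵀ = ΔX ∧ (∀ i j, i ≠ k → j ≠ k → ΔX i j = 0) ∧ ΔX *ᵥ v = r := by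
  obtain ⟨a, ha⟩ := exists_smul_add_dotProduct_smul_single_eq h2 hv r
  refine ⟨vecMulVec a (Pi.single k 1) + vecMulVec (Pi.single k 1) a, ?_, ?_, ?_⟩
  · rw [transpose_add, transpose_vecMulVec, transpose_vecMulVec, add_comm]
  · intro i j hi hj
    simp [vecMulVec_apply, hi, hj]
  · rw [vecMulVec_add_vecMulVec_single_mulVec, ha]

end RowColumnPerturbation

theorem exists_single_agent_perturbation_general {n : ℕ} (X₀ : Matrix (Fin (n + 1)) (Fin (n + 1)) ℝ)
    (v : Fin (n + 1) → ℝ) (hv : v 0 ≠ 0) (lam : ℝ) :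
    ∃ ΔX : Matrix (Fin (n + 1)) (Fin (n + 1)) ℝ,
      ΔXᵀ = ΔX ∧
      (∀ i j, i ≠ 0 → j ≠ 0 → ΔX i j = 0) ∧
      (X₀ + ΔX).mulVec v = lam • v := by
  obtain ⟨ΔX, hsymm, hsupp, hΔX⟩ :=
    exists_symm_rowColumn_mulVec_eq two_ne_zero hv (lam • v - X₀ *ᵥ v)
  exact ⟨ΔX, hsymm, hsupp, by rw [add_mulVec, hΔX, add_sub_cancel]⟩

/-- For any symmetric `X₀`, any `v*` with nonzero first coordinate and any `λ*`, there is
a symmetric perturbation `ΔX₀` supported on the first row and column such that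
`(X₀ + ΔX₀) v* = λ* v*`. -/
theorem exists_single_agent_perturbation {n : ℕ} (X₀ : Matrix (Fin (n + 1)) (Fin (n + 1)) ℝ)
    (hsym : X₀ᵀ = X₀) (v : Fin (n + 1) → ℝ) (hv : v 0 ≠ 0) (lam : ℝ) :
    ∃ ΔX : Matrix (Fin (n + 1)) (Fin (n + 1)) ℝ,
      ΔXᵀ = ΔX ∧
      (∀ i j, i ≠ 0 → j ≠ 0 → ΔX i j = 0) ∧
      (X₀ + ΔX).mulVec v = lam • v :=
  exists_single_agent_perturbation_general X₀ v hv lam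
end

section
/- Let X₀ be a real symmetric n×n matrix, λ* ∈ ℝ, and v* ∈ ℝⁿ with v*₁ = 1. Define δx = V⁻¹(λ*I − X₀)v* ∈ ℝⁿ, where V = [v*, e₂, …, eₙ]. Let ΔX₀ be the symmetric matrix with first column (and first row) equal to δx and all other entries zero (with ΔX₀_{11} = δx₁). Then (X₀ + ΔX₀) v* = λ* v*. -/
open Matrix

/-!
With `y := (λ* I - X₀) v*`, the vector `δx = W y` is characterised by `δx ⬝ᵥ v* = y 0` and
`δx i = y i` for `i ≠ 0`. As `v* 0 = 1`, these are exactly the entries of `ΔX₀ v*`, so `ΔX₀ v* = y`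
and `(X₀ + ΔX₀) v* = X₀ v* + y = λ* v*`.
-/

namespace ArrowPerturbation

variable {K : Type*} [Field K] {n : ℕ}

def arrowMatrix (d : Fin (n + 1) → K) : Matrix (Fin (n + 1)) (Fin (n + 1)) K :=
  of fun i j => if i = 0 then d j else if j = 0 then d i else 0

/-- For `v 0 ≠ 0`, the inverse of the matrix with first row `v` and the rows of the identity below
it, i.e. of `Vᵀ` (not `V`) for `V = [v, e₂, …, eₙ]`. -/
def pivotRowInv (v : Fin (n + 1) → K) : Matrix (Fin (n + 1)) (Fin (n + 1)) K :=
  of fun i j => if i = 0 then (if j = 0 then 1 / v 0 else -(v j) / v 0) else if i = j then 1 else 0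

theorem arrowMatrix_mulVec_zero (d v : Fin (n + 1) → K) : (arrowMatrix d *ᵥ v) 0 = d ⬝ᵥ v := by
  simp [arrowMatrix, mulVec, dotProduct]

theorem arrowMatrix_mulVec_of_ne_zero (d v : Fin (n + 1) → K) {i : Fin (n + 1)} (hi : i ≠ 0) :
    (arrowMatrix d *ᵥ v) i = d i * v 0 := by
  simp [arrowMatrix, mulVec, dotProduct, hi]

theorem pivotRowInv_mulVec_of_ne_zero (v y : Fin (n + 1) → K) {i : Fin (n + 1)} (hi : i ≠ 0) :
    (pivotRowInv v *ᵥ y) i = y i := by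
  simp [pivotRowInv, mulVec, dotProduct, hi]

theorem pivotRowInv_mulVec_dotProduct {v : Fin (n + 1) → K} (hv : v 0 ≠ 0) (y : Fin (n + 1) → K) :
    (pivotRowInv v *ᵥ y) ⬝ᵥ v = y 0 := by
  have hzero : (pivotRowInv v *ᵥ y) 0 * v 0 = y 0 - ∑ j : Fin n, y j.succ * v j.succ := by
    simp only [mulVec, dotProduct, Fin.sum_univ_succ, pivotRowInv, of_apply, if_true,
      Fin.succ_ne_zero, if_false, add_mul, Finset.sum_mul]
    rw [sub_eq_add_neg, ← Finset.sum_neg_distrib]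
    congr 1
    · field_simp
    · exact Finset.sum_congr rfl fun j _ => by field_simp
  rw [dotProduct, Fin.sum_univ_succ, hzero]
  simp only [pivotRowInv_mulVec_of_ne_zero v y (Fin.succ_ne_zero _)]
  ring

theorem arrowMatrix_pivotRowInv_mulVec {v : Fin (n + 1) → K} (hv : v 0 = 1) (y : Fin (n + 1) → K) :
    arrowMatrix (pivotRowInv v *ᵥ y) *ᵥ v = y := by
  funext i
  rcases eq_or_ne i 0 with rfl | hi
  · rw [arrowMatrix_mulVec_zero, pivotRowInv_mulVec_dotProduct (by simp [hv])]
  · rw [arrowMatrix_mulVec_of_ne_zero _ _ hi, pivotRowInv_mulVec_of_ne_zero _ _ hi, hv, mul_one]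

end ArrowPerturbation

open ArrowPerturbation in
theorem explicit_perturbation_works_general {n : ℕ} (X₀ : Matrix (Fin (n + 1)) (Fin (n + 1)) ℝ)
    (lam : ℝ) (v : Fin (n + 1) → ℝ) (hv : v 0 = 1) :
    let W : Matrix (Fin (n + 1)) (Fin (n + 1)) ℝ :=
      Matrix.of fun i j =>
        if i = 0 then (if j = 0 then 1 / v 0 else -(v j) / v 0)
        else if i = j then 1 else 0
    let δx : Fin (n + 1) → ℝ := W.mulVec ((lam • (1 : Matrix (Fin (n + 1)) (Fin (n + 1)) ℝ) - X₀).mulVec v)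
    let ΔX : Matrix (Fin (n + 1)) (Fin (n + 1)) ℝ :=
      Matrix.of fun i j => if i = 0 then δx j else if j = 0 then δx i else 0
    (X₀ + ΔX).mulVec v = lam • v := by
  intro W δx ΔX
  have hΔX : ΔX *ᵥ v = (lam • (1 : Matrix (Fin (n + 1)) (Fin (n + 1)) ℝ) - X₀) *ᵥ v :=
    arrowMatrix_pivotRowInv_mulVec hv _
  rw [add_mulVec, hΔX, sub_mulVec, smul_mulVec, one_mulVec]
  abel

/-- The explicit single-agent perturbation: with `v*₁ = 1`, `δx = V⁻¹ (λ* I - X₀) v*`,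
and `ΔX₀` the symmetric matrix with first row and column equal to `δx` and zeros
elsewhere, we have `(X₀ + ΔX₀) v* = λ* v*`. -/
theorem explicit_perturbation_works {n : ℕ} (X₀ : Matrix (Fin (n + 1)) (Fin (n + 1)) ℝ)
    (hsym : X₀ᵀ = X₀) (lam : ℝ) (v : Fin (n + 1) → ℝ) (hv : v 0 = 1) :
    let W : Matrix (Fin (n + 1)) (Fin (n + 1)) ℝ :=
      Matrix.of fun i j =>
        if i = 0 then (if j = 0 then 1 / v 0 else -(v j) / v 0)
        else if i = j then 1 else 0
    let δx : Fin (n + 1) → ℝ := W.mulVec ((lam • (1 : Matrix (Fin (n + 1)) (Fin (n + 1)) ℝ) - X₀).mulVec v)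
    let ΔX : Matrix (Fin (n + 1)) (Fin (n + 1)) ℝ :=
      Matrix.of fun i j => if i = 0 then δx j else if j = 0 then δx i else 0
    (X₀ + ΔX).mulVec v = lam • v :=
  explicit_perturbation_works_general X₀ lam v hv
end

section
/- Let X₀ be a real symmetric n×n matrix with simple largest eigenvalue λ₁ > 0 and unit eigenvector w₁ whose entries are all nonzero. Then there exists t₀ < 1/λ₁ such that for all t ∈ (t₀, 1/λ₁), every entry of X(t) = X₀(I − tX₀)⁻¹ is nonzero and sign(X(t)_{ij}) = sign((w₁)_i (w₁)_j) for all i, j. -/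
/-!
Deflate the leading eigendirection: with `P = w₁ w₁ᵀ` and `D = X₀ - λ₁ P`, symmetry gives
`D P = P D = 0`, hence `(1 - t X₀)⁻¹ = (1 - t D)⁻¹ + (t λ₁ / (1 - t λ₁)) P`. Simplicity of `λ₁`
makes `1 - λ₁⁻¹ D` invertible, so `(1 - t λ₁) X(t) → λ₁ P` as `t → 1/λ₁`. Since `1 - t λ₁ > 0`
for `t < 1/λ₁`, each entry of `X(t)` eventually has the sign of `(w₁)ᵢ (w₁)ⱼ ≠ 0`.
-/

open Matrix Filter Topology

section Deflation

variable {ι R : Type*} [Fintype ι] [CommRing R] {A : Matrix ι ι R} {μ : R} {w : ι → R}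

def deflation (A : Matrix ι ι R) (μ : R) (w : ι → R) : Matrix ι ι R :=
  A - μ • vecMulVec w w

lemma vecMulVec_self_mul_self (hw : w ⬝ᵥ w = 1) :
    vecMulVec w w * vecMulVec w w = vecMulVec w w := by
  rw [vecMulVec_mul_vecMulVec, hw, one_smul]

lemma mul_vecMulVec_self (heig : A *ᵥ w = μ • w) :
    A * vecMulVec w w = μ • vecMulVec w w := by
  rw [mul_vecMulVec, heig, smul_vecMulVec]

lemma vecMulVec_self_mul (hA : Aᵀ = A) (heig : A *ᵥ w = μ • w) :
    vecMulVec w w * A = μ • vecMulVec w w := by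
  rw [vecMulVec_mul, ← mulVec_transpose, hA, heig, vecMulVec_smul]

lemma deflation_mul_vecMulVec_self (hw : w ⬝ᵥ w = 1) (heig : A *ᵥ w = μ • w) :
    deflation A μ w * vecMulVec w w = 0 := by
  rw [deflation, sub_mul, mul_vecMulVec_self heig, smul_mul, vecMulVec_self_mul_self hw, sub_self]

lemma vecMulVec_self_mul_deflation (hw : w ⬝ᵥ w = 1) (hA : Aᵀ = A) (heig : A *ᵥ w = μ • w) :
    vecMulVec w w * deflation A μ w = 0 := by
  rw [deflation, mul_sub, vecMulVec_self_mul hA heig, Matrix.mul_smul, vecMulVec_self_mul_self hw,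
    sub_self]

lemma deflation_mulVec_self (hw : w ⬝ᵥ w = 1) (heig : A *ᵥ w = μ • w) :
    deflation A μ w *ᵥ w = 0 := by
  rw [deflation, sub_mulVec, heig, smul_mulVec, vecMulVec_mulVec, hw]
  simp

end Deflation

section Resolvent

variable {ι K : Type*} [Fintype ι] [DecidableEq ι] [Field K] {A : Matrix ι ι K} {μ : K}
  {w : ι → K}

lemma isUnit_det_one_sub_inv_smul_deflation (hw : w ⬝ᵥ w = 1) (hA : Aᵀ = A)
    (heig : A *ᵥ w = μ • w) (hμ : μ ≠ 0)
    (hsimple : ∀ v : ι → K, v ≠ 0 → A *ᵥ v = μ • v → ∃ c : K, v = c • w) :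
    IsUnit (1 - μ⁻¹ • deflation A μ w).det := by
  rw [isUnit_iff_ne_zero]
  intro hdet
  obtain ⟨v, hv0, hv⟩ := exists_mulVec_eq_zero_iff.2 hdet
  have hDv : deflation A μ w *ᵥ v = μ • v := by
    rw [sub_mulVec, one_mulVec, smul_mulVec, sub_eq_zero] at hv
    conv_rhs => rw [hv]
    rw [smul_smul, mul_inv_cancel₀ hμ, one_smul]
  have hPv : vecMulVec w w *ᵥ v = 0 := by
    have h := congrArg (vecMulVec w w *ᵥ ·) hDv
    simp only [mulVec_mulVec, vecMulVec_self_mul_deflation hw hA heig, zero_mulVec,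
      mulVec_smul] at h
    exact (smul_eq_zero.1 h.symm).resolve_left hμ
  have hAv : A *ᵥ v = μ • v := by
    rw [← hDv, deflation, sub_mulVec, smul_mulVec, hPv, smul_zero, sub_zero]
  obtain ⟨c, rfl⟩ := hsimple v hv0 hAv
  rw [mulVec_smul, deflation_mulVec_self hw heig, smul_zero, eq_comm, smul_eq_zero] at hDv
  exact hv0 (hDv.resolve_left hμ)

lemma inv_one_sub_smul_eq (hw : w ⬝ᵥ w = 1) (hA : Aᵀ = A) (heig : A *ᵥ w = μ • w) {t : K}
    (hD : IsUnit (1 - t • deflation A μ w).det) (ht : t * μ ≠ 1) :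
    (1 - t • A)⁻¹ = (1 - t • deflation A μ w)⁻¹ + (t * μ / (1 - t * μ)) • vecMulVec w w := by
  set D := deflation A μ w
  set P := vecMulVec w w
  have hDP : (1 - t • D) * P = P := by
    rw [sub_mul, one_mul, smul_mul, deflation_mul_vecMulVec_self hw heig, smul_zero, sub_zero]
  have hPD : P * (1 - t • D) = P := by
    rw [mul_sub, mul_one, Matrix.mul_smul, vecMulVec_self_mul_deflation hw hA heig, smul_zero,
      sub_zero]
  have hPDinv : P * (1 - t • D)⁻¹ = P := by
    rw [← hPD, mul_assoc, mul_nonsing_inv _ hD, mul_one, hPD]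
  have hsplit : 1 - t • A = (1 - t • D) - (t * μ) • P := by
    rw [show A = D + μ • P from (sub_add_cancel _ _).symm, smul_add, smul_smul]
    abel
  apply inv_eq_right_inv
  rw [hsplit, sub_mul, mul_add, mul_add, mul_nonsing_inv _ hD, Matrix.mul_smul, hDP, smul_mul,
    hPDinv, smul_mul, Matrix.mul_smul, vecMulVec_self_mul_self hw, smul_smul]
  have : 1 - t * μ ≠ 0 := sub_ne_zero.2 ht.symm
  match_scalars
  · rfl
  · field_simp
    ring

end Resolvent

section Limit

variable {ι 𝕜 : Type*} [Fintype ι] [DecidableEq ι] [NormedField 𝕜] {A : Matrix ι ι 𝕜} {μ : 𝕜}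
  {w : ι → 𝕜}

theorem tendsto_one_sub_mul_smul_mul_inv_one_sub_smul (hw : w ⬝ᵥ w = 1) (hA : Aᵀ = A)
    (heig : A *ᵥ w = μ • w) (hμ : μ ≠ 0)
    (hsimple : ∀ v : ι → 𝕜, v ≠ 0 → A *ᵥ v = μ • v → ∃ c : 𝕜, v = c • w) :
    Tendsto (fun t : 𝕜 ↦ (1 - t * μ) • (A * (1 - t • A)⁻¹)) (𝓝[≠] μ⁻¹)
      (𝓝 (μ • vecMulVec w w)) := by
  set D := deflation A μ w
  set P := vecMulVec w w
  have hD : IsUnit (1 - μ⁻¹ • D).det :=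
    isUnit_det_one_sub_inv_smul_deflation hw hA heig hμ hsimple
  have hdet : ContinuousAt (fun t : 𝕜 ↦ (1 - t • D).det) μ⁻¹ := by fun_prop
  have hinv : ContinuousAt (fun t : 𝕜 ↦ A * (1 - t • D)⁻¹) μ⁻¹ := by
    refine continuousAt_const.mul ((continuousAt_matrix_inv _ ?_).comp (by fun_prop))
    rw [Ring.inverse_eq_inv']
    exact continuousAt_inv₀ hD.ne_zero
  have hsplit : ∀ᶠ t in 𝓝[≠] μ⁻¹, (1 - t * μ) • (A * (1 - t • D)⁻¹) + (t * μ * μ) • P =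
      (1 - t * μ) • (A * (1 - t • A)⁻¹) := by
    filter_upwards [self_mem_nhdsWithin,
      nhdsWithin_le_nhds (hdet.eventually_ne hD.ne_zero)] with t ht htD
    have htμ : t * μ ≠ 1 := fun h ↦ ht (eq_inv_of_mul_eq_one_left h)
    rw [inv_one_sub_smul_eq hw hA heig (isUnit_iff_ne_zero.2 htD) htμ, mul_add, Matrix.mul_smul,
      mul_vecMulVec_self heig, smul_add, smul_smul, smul_smul]
    congr 2
    field_simp [sub_ne_zero.2 htμ.symm]
  have hlim : Tendsto (fun t : 𝕜 ↦ (1 - t * μ) • (A * (1 - t • D)⁻¹) + (t * μ * μ) • P)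
      (𝓝 μ⁻¹) (𝓝 ((1 - μ⁻¹ * μ) • (A * (1 - μ⁻¹ • D)⁻¹) + (μ⁻¹ * μ * μ) • P)) :=
    ((tendsto_const_nhds.sub (tendsto_id.mul_const μ)).smul hinv.tendsto).add
      ((tendsto_id.mul_const μ |>.mul_const μ).smul tendsto_const_nhds)
  rw [inv_mul_cancel₀ hμ, sub_self, zero_smul, zero_add, one_mul] at hlim
  exact (hlim.mono_left nhdsWithin_le_nhds).congr' hsplit

end Limit

lemma Real.sign_mul_of_pos_left {c x : ℝ} (hc : 0 < c) : Real.sign (c * x) = Real.sign x := by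
  rcases lt_trichotomy x 0 with hx | rfl | hx
  · rw [Real.sign_of_neg (mul_neg_of_pos_of_neg hc hx), Real.sign_of_neg hx]
  · rw [mul_zero]
  · rw [Real.sign_of_pos (mul_pos hc hx), Real.sign_of_pos hx]

lemma Filter.Tendsto.eventually_sign_eq {α : Type*} {l : Filter α} {f : α → ℝ} {a : ℝ}
    (hf : Tendsto f l (𝓝 a)) (ha : a ≠ 0) : ∀ᶠ x in l, Real.sign (f x) = Real.sign a := by
  rcases ha.lt_or_gt with ha | ha
  · filter_upwards [hf.eventually_lt_const ha] with x hx
    rw [Real.sign_of_neg hx, Real.sign_of_neg ha]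
  · filter_upwards [hf.eventually_const_lt ha] with x hx
    rw [Real.sign_of_pos hx, Real.sign_of_pos ha]

theorem eventual_sign_pattern_general {n : ℕ} (X₀ : Matrix (Fin n) (Fin n) ℝ)
    (hsym : X₀ᵀ = X₀) (lam1 : ℝ) (hpos : 0 < lam1) (w1 : Fin n → ℝ)
    (heig : X₀.mulVec w1 = lam1 • w1)
    (hunit : ∑ i, w1 i ^ 2 = 1)
    (hnz : ∀ i, w1 i ≠ 0)
    (hsimple : ∀ v : Fin n → ℝ, v ≠ 0 → X₀.mulVec v = lam1 • v → ∃ c : ℝ, v = c • w1) :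
    ∃ t₀ : ℝ, t₀ < 1 / lam1 ∧ ∀ t ∈ Set.Ioo t₀ (1 / lam1), ∀ i j,
      (X₀ * ((1 : Matrix (Fin n) (Fin n) ℝ) - t • X₀)⁻¹) i j ≠ 0 ∧
      Real.sign ((X₀ * (1 - t • X₀)⁻¹) i j) = Real.sign (w1 i * w1 j) := by
  have hw : w1 ⬝ᵥ w1 = 1 := by simpa [dotProduct, sq] using hunit
  have hlim := (tendsto_one_sub_mul_smul_mul_inv_one_sub_smul hw hsym heig hpos.ne'
    hsimple).mono_left (nhdsLT_le_nhdsNE lam1⁻¹)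
  have hgap : ∀ᶠ t in 𝓝[<] lam1⁻¹, 0 < 1 - t * lam1 :=
    eventually_mem_nhdsWithin.mono fun t ht ↦ by
      rw [Set.mem_Iio, ← one_div, lt_div_iff₀ hpos] at ht
      linarith
  have hsign : ∀ i j, ∀ᶠ t in 𝓝[<] lam1⁻¹,
      Real.sign ((1 - t * lam1) * (X₀ * (1 - t • X₀)⁻¹) i j) = Real.sign (w1 i * w1 j) := by
    intro i j
    have h := ((hlim.apply_nhds i).apply_nhds j).eventually_sign_eq
      (mul_ne_zero hpos.ne' (mul_ne_zero (hnz i) (hnz j)))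
    simpa only [Pi.smul_apply, Matrix.smul_apply, smul_eq_mul, vecMulVec_apply,
      Real.sign_mul_of_pos_left hpos] using h
  obtain ⟨t₀, ht₀, hIoo⟩ := mem_nhdsLT_iff_exists_Ioo_subset.1
    (hgap.and (eventually_all.2 fun i ↦ eventually_all.2 (hsign i)))
  refine ⟨t₀, by rwa [one_div], fun t ht i j ↦ ?_⟩
  obtain ⟨hgap_t, hsign_t⟩ := hIoo (by rwa [one_div] at ht)
  have hij := hsign_t i j
  rw [Real.sign_mul_of_pos_left hgap_t] at hij
  refine ⟨fun h ↦ mul_ne_zero (hnz i) (hnz j) ?_, hij⟩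
  rwa [h, Real.sign_zero, eq_comm, Real.sign_eq_zero_iff] at hij

/-- For symmetric `X₀` with simple, strictly largest eigenvalue `λ₁ > 0` and unit
eigenvector `w₁` with no zero entries, eventually (for `t` close to `1/λ₁` from below)
every entry of `X(t) = X₀ (I - t X₀)⁻¹` is nonzero with sign `sign((w₁)ᵢ (w₁)ⱼ)`. -/
theorem eventual_sign_pattern {n : ℕ} (X₀ : Matrix (Fin n) (Fin n) ℝ)
    (hsym : X₀ᵀ = X₀) (lam1 : ℝ) (hpos : 0 < lam1) (w1 : Fin n → ℝ)
    (heig : X₀.mulVec w1 = lam1 • w1)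
    (hunit : ∑ i, w1 i ^ 2 = 1)
    (hnz : ∀ i, w1 i ≠ 0)
    (hsimple : ∀ v : Fin n → ℝ, v ≠ 0 → X₀.mulVec v = lam1 • v → ∃ c : ℝ, v = c • w1)
    (hmax : ∀ μ : ℝ, μ ≠ lam1 → (∃ v, v ≠ 0 ∧ X₀.mulVec v = μ • v) → μ < lam1) :
    ∃ t₀ : ℝ, t₀ < 1 / lam1 ∧ ∀ t ∈ Set.Ioo t₀ (1 / lam1), ∀ i j,
      (X₀ * ((1 : Matrix (Fin n) (Fin n) ℝ) - t • X₀)⁻¹) i j ≠ 0 ∧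
      Real.sign ((X₀ * (1 - t • X₀)⁻¹) i j) = Real.sign (w1 i * w1 j) :=
  eventual_sign_pattern_general X₀ hsym lam1 hpos w1 heig hunit hnz hsimple
end

section
/- Let v* ∈ ℝⁿ with v*₁ = 1, let α ∈ ℝ^{n−1} with α_i = v*_{i+1}, let L = λ*I − X₀ for a symmetric matrix X₀ and λ* ∈ ℝ, let L₁ be the first column of L, and let L̄ be the principal submatrix of L obtained by deleting the first row and column. Then, with ΔX₀ first column δx = V⁻¹ L v* as in the construction, we have ‖δx‖ ≤ ‖L₁‖ + ‖(−αᵀ L̄ α, L̄ α)‖, where the second term vanishes when α = 0. In particular, when v* = e₁, ‖δx‖ = ‖L₁‖ = ‖(λ*I − X₀)e₁‖. -/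
/-!
Write `v* = (1, α)`. Multiplying by `V⁻¹` leaves the last `n` entries of `L v*` unchanged, namely
`L₁ + L̄ α` there, and replaces the first entry by `(L v*)₀ - αᵀ (L v*)_{2..n}`. By symmetry of `L`
the cross terms `L_{1,2..n} α` and `αᵀ L_{2..n,1}` cancel, leaving `L₁₁ - αᵀ L̄ α`. Hence
`δx = L₁ + (-αᵀ L̄ α, L̄ α)` exactly, and the bound is the triangle inequality.
-/

open Matrix

lemma Real.sqrt_sum_sq_add_le {ι : Type*} [Fintype ι] (f g : ι → ℝ) :
    √(∑ i, (f i + g i) ^ 2) ≤ √(∑ i, f i ^ 2) + √(∑ i, g i ^ 2) := by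
  simpa [EuclideanSpace.norm_eq, sq_abs] using
    norm_add_le (WithLp.toLp 2 f : EuclideanSpace ℝ ι) (WithLp.toLp 2 g)

namespace Matrix

variable {R : Type*} {n : ℕ}

lemma mulVec_apply_of_head_eq_one [CommSemiring R] (L : Matrix (Fin (n + 1)) (Fin (n + 1)) R)
    {v : Fin (n + 1) → R} (hv : v 0 = 1) (i : Fin (n + 1)) :
    (L *ᵥ v) i = L i 0 + ∑ j : Fin n, L i j.succ * v j.succ := by
  simp [mulVec, dotProduct, Fin.sum_univ_succ, hv]

/-- The inverse of the matrix `[v, e₂, …, eₙ]` whose first column is `v`, when `v 0 ≠ 0`. -/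
def firstColumnInv [Field R] (v : Fin (n + 1) → R) : Matrix (Fin (n + 1)) (Fin (n + 1)) R :=
  of fun i j => if i = 0 then (if j = 0 then 1 / v 0 else -(v j) / v 0) else if i = j then 1 else 0

variable [Field R] {v : Fin (n + 1) → R}

lemma firstColumnInv_mulVec_zero (hv : v 0 = 1) (u : Fin (n + 1) → R) :
    (firstColumnInv v *ᵥ u) 0 = u 0 - ∑ j : Fin n, v j.succ * u j.succ := by
  simp [firstColumnInv, mulVec, dotProduct, Fin.sum_univ_succ, hv, sub_eq_add_neg]

lemma firstColumnInv_mulVec_succ (u : Fin (n + 1) → R) (i : Fin n) :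
    (firstColumnInv v *ᵥ u) i.succ = u i.succ := by
  simp [firstColumnInv, mulVec, dotProduct, Fin.succ_ne_zero]

theorem firstColumnInv_mulVec_mulVec {L : Matrix (Fin (n + 1)) (Fin (n + 1)) R} (hL : L.IsSymm)
    (hv : v 0 = 1) :
    firstColumnInv v *ᵥ (L *ᵥ v) = (fun i => L i 0) +
      Fin.cons (-(Fin.tail v ⬝ᵥ L.submatrix Fin.succ Fin.succ *ᵥ Fin.tail v))
        (L.submatrix Fin.succ Fin.succ *ᵥ Fin.tail v) := by
  have tail_eq (i : Fin n) : (L *ᵥ v) i.succ = L i.succ 0 +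
      (L.submatrix Fin.succ Fin.succ *ᵥ Fin.tail v) i := by
    rw [mulVec_apply_of_head_eq_one L hv]; rfl
  ext i
  cases i using Fin.cases with
  | zero =>
    have cross_terms : ∑ j : Fin n, L 0 j.succ * v j.succ = ∑ j : Fin n, v j.succ * L j.succ 0 :=
      Finset.sum_congr rfl fun j _ => by rw [hL.apply, mul_comm]
    simp only [firstColumnInv_mulVec_zero hv, tail_eq, mulVec_apply_of_head_eq_one L hv,
      mul_add, Finset.sum_add_distrib, cross_terms, Pi.add_apply, Fin.cons_zero]
    simp only [dotProduct, Fin.tail]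
    ring
  | succ i => simp [firstColumnInv_mulVec_succ, tail_eq]

end Matrix

/-- Norm bound for the single-agent perturbation: with `v*₁ = 1`, `α = (v*₂,…,v*ₙ)`,
`L = λ* I - X₀`, `L₁` the first column of `L` and `L̄` the lower-right principal
submatrix, the perturbation `δx = V⁻¹ L v*` satisfies
`‖δx‖ ≤ ‖L₁‖ + ‖(-αᵀ L̄ α, L̄ α)‖`; the second term vanishes when `α = 0`, and when
`v* = e₁`, `‖δx‖ = ‖L₁‖`. -/
theorem perturbation_norm_bound {n : ℕ} (X₀ : Matrix (Fin (n + 1)) (Fin (n + 1)) ℝ)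
    (hsym : X₀ᵀ = X₀) (lam : ℝ) (v : Fin (n + 1) → ℝ) (hv : v 0 = 1) :
    let L : Matrix (Fin (n + 1)) (Fin (n + 1)) ℝ :=
      lam • (1 : Matrix (Fin (n + 1)) (Fin (n + 1)) ℝ) - X₀
    let L₁ : Fin (n + 1) → ℝ := fun i => L i 0
    let Lbar : Matrix (Fin n) (Fin n) ℝ := Matrix.of fun i j => L i.succ j.succ
    let α : Fin n → ℝ := fun i => v i.succ
    let W : Matrix (Fin (n + 1)) (Fin (n + 1)) ℝ :=
      Matrix.of fun i j =>
        if i = 0 then (if j = 0 then 1 / v 0 else -(v j) / v 0)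
        else if i = j then 1 else 0
    let δx : Fin (n + 1) → ℝ := W.mulVec (L.mulVec v)
    let z : Fin (n + 1) → ℝ := Fin.cons (-(α ⬝ᵥ Lbar.mulVec α)) (Lbar.mulVec α)
    Real.sqrt (∑ i, δx i ^ 2) ≤ Real.sqrt (∑ i, L₁ i ^ 2) + Real.sqrt (∑ i, z i ^ 2) ∧
    (α = 0 → Real.sqrt (∑ i, z i ^ 2) = 0) ∧
    ((v = fun i => if i = 0 then 1 else 0) →
      Real.sqrt (∑ i, δx i ^ 2) = Real.sqrt (∑ i, L₁ i ^ 2)) := by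
  intro L L₁ Lbar α W δx z
  have hL : L.IsSymm := by
    simp only [L, IsSymm, transpose_sub, transpose_smul, transpose_one, hsym]
  have hδx : δx = L₁ + z := firstColumnInv_mulVec_mulVec hL hv
  have hz : α = 0 → z = 0 := by
    intro hα
    simp only [z, hα, mulVec_zero, dotProduct_zero, neg_zero]
    exact cons_zero_zero
  refine ⟨?_, fun hα => by simp [hz hα], fun he₁ => ?_⟩
  · rw [hδx]
    exact Real.sqrt_sum_sq_add_le L₁ z
  · have hα : α = 0 := funext fun i => by simp [α, he₁, Fin.succ_ne_zero]
    simp [hδx, hz hα]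
end
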